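/- Let n ≥ 2, 0 < β < n, 1 < p̄, q̄ < ∞, and 1 < p < q < ∞ with 1/p − 1/q = β/n. For the function f₀(x) = (1 + |x|^{qβ})^{-(1 + n/(qβ))} on ℝⁿ one has the equality ‖H_β f₀‖_{L^q_{|x|}L^{q̄}_θ} = C_{p,q,n,β} · ω_n^{1/q̄ - 1/p̄ + β/n} · ‖f₀‖_{L^p_{|x|}L^{p̄}_θ}; in particular the constant C_{p,q,n,β} · ω_n^{1/q̄ - 1/p̄ + β/n} is sharp, i.e., it equals the operator norm of H_β from L^p_{|x|}L^{p̄}_θ(ℝⁿ) to L^q_{|x|}L^{q̄}_θ(ℝⁿ). -/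

import Mathlib

open MeasureTheory Metric Set

noncomputable section

/-- Euclidean space ℝⁿ. -/
abbrev Euc (n : ℕ) := EuclideanSpace ℝ (Fin n)

/-- Volume of the unit ball in ℝⁿ: Ω_n = π^(n/2) / Γ(1 + n/2). -/
def ballVol (n : ℕ) : ℝ := Real.pi ^ ((n : ℝ) / 2) / Real.Gamma (1 + (n : ℝ) / 2)

/-- Surface measure of the unit sphere S^{n-1}: ω_n = 2π^(n/2) / Γ(n/2). -/
def sphArea (n : ℕ) : ℝ := 2 * Real.pi ^ ((n : ℝ) / 2) / Real.Gamma ((n : ℝ) / 2)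

/-- The surface measure dθ on the unit sphere S^{n-1} ⊂ ℝⁿ (total mass ω_n = n·Ω_n). -/
def sphereMeasure (n : ℕ) : Measure (sphere (0 : Euc n) 1) :=
  (volume : Measure (Euc n)).toSphere

/-- Mixed radial-angular norm
‖f‖ = (∫₀^∞ (∫_{S^{n-1}} |f(rθ)|^{p̄} dθ)^{p/p̄} r^{n-1} dr)^{1/p}. -/
def mixedNorm (n : ℕ) (p pb : ℝ) (f : Euc n → ℝ) : ℝ :=
  (∫ r in Ioi (0 : ℝ),
      (∫ θ, |f (r • (θ : Euc n))| ^ pb ∂(sphereMeasure n)) ^ (p / pb) * r ^ ((n : ℝ) - 1)) ^ (1 / p)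

/-- Weak mixed radial-angular norm: sup_{λ>0} λ‖χ_{|f|>λ}‖. -/
def wMixedNorm (n : ℕ) (p pb : ℝ) (f : Euc n → ℝ) : ℝ :=
  ⨆ l : {l : ℝ // 0 < l},
    l.1 * mixedNorm n p pb (indicator {x | l.1 < |f x|} fun _ => (1 : ℝ))

/-- n-dimensional Hardy operator H f(x) = (Ω_n |x|ⁿ)⁻¹ ∫_{|y|<|x|} f(y) dy. -/
def hardyOp (n : ℕ) (f : Euc n → ℝ) (x : Euc n) : ℝ :=
  (ballVol n * ‖x‖ ^ n)⁻¹ * ∫ y in {y : Euc n | ‖y‖ < ‖x‖}, f y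

/-- Dual Hardy operator H* f(x) = ∫_{|y|≥|x|} f(y)/(Ω_n |y|ⁿ) dy. -/
def dualHardyOp (n : ℕ) (f : Euc n → ℝ) (x : Euc n) : ℝ :=
  ∫ y in {y : Euc n | ‖x‖ ≤ ‖y‖}, f y / (ballVol n * ‖y‖ ^ n)

/-- Fractional Hardy operator H_β f(x) = (Ω_n^{1/n}|x|)^{β-n} ∫_{|y|<|x|} f(y) dy. -/
def fracHardyOp (n : ℕ) (β : ℝ) (f : Euc n → ℝ) (x : Euc n) : ℝ :=
  (ballVol n ^ ((1 : ℝ) / n) * ‖x‖) ^ (-((n : ℝ) - β)) * ∫ y in {y : Euc n | ‖y‖ < ‖x‖}, f y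

/-- L^p norm on ℝⁿ. -/
def lpNorm (n : ℕ) (p : ℝ) (f : Euc n → ℝ) : ℝ := (∫ x : Euc n, |f x| ^ p) ^ (1 / p)

/-- Beta function B(a,b) = ∫₀¹ t^{a-1}(1-t)^{b-1} dt. -/
def betaFn (a b : ℝ) : ℝ := ∫ t in (0 : ℝ)..1, t ^ (a - 1) * (1 - t) ^ (b - 1)

/-- Sharp constant C_{p,q,n,β} = (p'/q)^{1/q}((n/(qβ))·B(n/(qβ), n/(q'β)))^{-β/n}. -/
def fracHardyConst (p q : ℝ) (n : ℕ) (β : ℝ) : ℝ :=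
  (p / (p - 1) / q) ^ (1 / q) *
    ((n / (q * β)) * betaFn ((n : ℝ) / (q * β)) ((n : ℝ) / ((q / (q - 1)) * β))) ^ (-(β / (n : ℝ)))

/-!
Everything is radial. In polar coordinates both mixed norms become one-dimensional integrals in
which the sphere contributes only the factor `ω_n ^ (1 / p̄)`. With `a = qβ` and `m = n / a`, so
that `a m = n`, the ball integral of `f₀ = (1 + |x| ^ a) ^ (-(1 + m))` has the closed form
`Ω_n |x| ^ n (1 + |x| ^ a) ^ (-m)`, hence `H_β f₀ (x) = Ω_n ^ (β / n) |x| ^ β (1 + |x| ^ a) ^ (-m)`.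
The substitutions `u = r ^ a` and then `t = u / (1 + u)` turn the radial integrals of `f₀ ^ p` and
`(H_β f₀) ^ q` into `B(m, (q - 1) m) / a` and `Ω_n ^ (β q / n) B(1 + m, (p - 1)(1 + m)) / a`. The
scaling relation `1/p - 1/q = β/n` reads `q m = p (1 + m)`, and with it the recurrence
`y B(x + 1, y) = x B(x, y + 1)` gives `B(1 + m, (p - 1)(1 + m)) = (p' / q) B(m, (q - 1) m)`, which
is exactly the identity claimed. Since `f₀` is admissible and has positive norm, no constant
smaller than `C_{p,q,n,β} ω_n ^ (1/q̄ - 1/p̄ + β/n)` can bound `H_β`.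
-/

lemma ballVol_pos (n : ℕ) : 0 < ballVol n :=
  div_pos (Real.rpow_pos_of_pos Real.pi_pos _) (Real.Gamma_pos_of_pos (by positivity))

lemma sphArea_eq_mul_ballVol (n : ℕ) : sphArea n = n * ballVol n := by
  rcases Nat.eq_zero_or_pos n with rfl | hn
  · simp [sphArea]
  have hn2 : (n : ℝ) / 2 ≠ 0 := by positivity
  have hΓ : Real.Gamma ((n : ℝ) / 2) ≠ 0 := (Real.Gamma_pos_of_pos (by positivity)).ne'
  rw [sphArea, ballVol, add_comm, Real.Gamma_add_one hn2]
  field_simp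

lemma volume_real_ball_zero_one {n : ℕ} (hn : n ≠ 0) :
    volume.real (ball (0 : Euc n) 1) = ballVol n := by
  have : Nonempty (Fin n) := ⟨⟨0, Nat.pos_of_ne_zero hn⟩⟩
  have hsqrt : Real.sqrt Real.pi ^ n = Real.pi ^ ((n : ℝ) / 2) := by
    rw [Real.sqrt_eq_rpow, ← Real.rpow_natCast, ← Real.rpow_mul Real.pi_pos.le, one_div_mul_eq_div]
  rw [measureReal_def, EuclideanSpace.volume_ball, ENNReal.ofReal_one, one_pow, one_mul,
    ENNReal.toReal_ofReal (by positivity), Fintype.card_fin, hsqrt, ballVol, add_comm]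

lemma sphereMeasure_real_univ (n : ℕ) : (sphereMeasure n).real univ = sphArea n := by
  rw [measureReal_def, sphereMeasure, Measure.toSphere_apply_univ, ENNReal.toReal_mul,
    finrank_euclideanSpace_fin, ENNReal.toReal_natCast]
  rcases eq_or_ne n 0 with rfl | hn
  · simp [sphArea]
  rw [← measureReal_def, volume_real_ball_zero_one hn, sphArea_eq_mul_ballVol]

lemma setIntegral_norm_lt_comp_norm {n : ℕ} (hn : n ≠ 0) (g : ℝ → ℝ) (R : ℝ) :
    ∫ y in {y : Euc n | ‖y‖ < R}, g ‖y‖ = sphArea n * ∫ r in Ioo 0 R, r ^ ((n : ℝ) - 1) * g r := by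
  have : Nontrivial (Euc n) :=
    Module.nontrivial_of_finrank_pos (R := ℝ) (by rw [finrank_euclideanSpace_fin]; omega)
  have hball : {y : Euc n | ‖y‖ < R} = (‖·‖) ⁻¹' Iio R := rfl
  have hpow (r : ℝ) : r ^ (n - 1) = r ^ ((n : ℝ) - 1) := by
    rw [← Real.rpow_natCast, Nat.cast_sub (Nat.one_le_iff_ne_zero.mpr hn), Nat.cast_one]
  rw [← integral_indicator (by rw [hball]; exact measurableSet_Iio.preimage measurable_norm),
    hball, show (((‖·‖) ⁻¹' Iio R).indicator fun y : Euc n => g ‖y‖) =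
      fun y => (Iio R).indicator g ‖y‖ from funext fun y => indicator_comp_right _,
    integral_fun_norm_addHaar, finrank_euclideanSpace_fin, volume_real_ball_zero_one hn,
    nsmul_eq_mul, smul_eq_mul, ← mul_assoc, ← sphArea_eq_mul_ballVol, ← Ioi_inter_Iio,
    ← setIntegral_indicator measurableSet_Iio]
  congr 1
  refine setIntegral_congr_fun measurableSet_Ioi fun r _ => ?_
  by_cases h : r < R <;> simp [h, hpow]

lemma mixedNorm_eq_of_radial (n : ℕ) {p pb : ℝ} (hp : p ≠ 0) (hpb : pb ≠ 0) {f : Euc n → ℝ}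
    {g : ℝ → ℝ} (hg : ∀ r, 0 < r → 0 ≤ g r) (hfg : ∀ x, x ≠ 0 → f x = g ‖x‖) :
    mixedNorm n p pb f =
      sphArea n ^ (1 / pb) * (∫ r in Ioi 0, g r ^ p * r ^ ((n : ℝ) - 1)) ^ (1 / p) := by
  have hω : 0 ≤ sphArea n := sphereMeasure_real_univ n ▸ measureReal_nonneg
  have hslice : ∀ r ∈ Ioi (0 : ℝ),
      (∫ θ, |f (r • (θ : Euc n))| ^ pb ∂sphereMeasure n) ^ (p / pb) * r ^ ((n : ℝ) - 1) =
        sphArea n ^ (p / pb) * (g r ^ p * r ^ ((n : ℝ) - 1)) := fun r (hr : 0 < r) => by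
    have hnorm (θ : sphere (0 : Euc n) 1) : ‖r • (θ : Euc n)‖ = r := by
      rw [norm_smul, norm_eq_of_mem_sphere θ, Real.norm_of_nonneg hr.le, mul_one]
    have hf (θ : sphere (0 : Euc n) 1) : f (r • (θ : Euc n)) = g r := by
      rw [hfg _ (norm_pos_iff.mp ((hnorm θ).symm ▸ hr)), hnorm]
    simp only [hf, integral_const, sphereMeasure_real_univ, smul_eq_mul, abs_of_nonneg (hg r hr)]
    rw [Real.mul_rpow hω (Real.rpow_nonneg (hg r hr) pb), ← Real.rpow_mul (hg r hr),
      mul_div_cancel₀ p hpb, mul_assoc]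
  have hint : 0 ≤ ∫ r in Ioi 0, g r ^ p * r ^ ((n : ℝ) - 1) :=
    setIntegral_nonneg measurableSet_Ioi fun r (hr : 0 < r) =>
      mul_nonneg (Real.rpow_nonneg (hg r hr) p) (Real.rpow_nonneg hr.le _)
  rw [mixedNorm, setIntegral_congr_fun measurableSet_Ioi hslice, integral_const_mul,
    Real.mul_rpow (Real.rpow_nonneg hω _) hint, ← Real.rpow_mul hω, div_mul_div_comm, mul_one,
    div_mul_cancel_right₀ hp, one_div pb]

lemma betaFn_eq_beta {a b : ℝ} (ha : 0 < a) (hb : 0 < b) :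
    betaFn a b = ProbabilityTheory.beta a b := by
  have hcpx : Complex.betaIntegral a b = betaFn a b := by
    rw [Complex.betaIntegral, betaFn, ← intervalIntegral.integral_ofReal]
    refine intervalIntegral.integral_congr fun t ⟨ht0, ht1⟩ => ?_
    simp only [inf_of_le_left zero_le_one, sup_of_le_right zero_le_one] at ht0 ht1
    push_cast
    rw [Complex.ofReal_cpow ht0, Complex.ofReal_cpow (sub_nonneg.mpr ht1)]
    push_cast
    rfl
  rw [ProbabilityTheory.beta_eq_betaIntegralReal a b ha hb, hcpx, Complex.ofReal_re]

lemma betaFn_pos {a b : ℝ} (ha : 0 < a) (hb : 0 < b) : 0 < betaFn a b :=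
  betaFn_eq_beta ha hb ▸ ProbabilityTheory.beta_pos ha hb

lemma mul_betaFn_add_one_left {x y : ℝ} (hx : 0 < x) (hy : 0 < y) :
    y * betaFn (x + 1) y = x * betaFn x (y + 1) := by
  rw [betaFn_eq_beta (by linarith) hy, betaFn_eq_beta hx (by linarith), ProbabilityTheory.beta,
    ProbabilityTheory.beta, Real.Gamma_add_one hx.ne', Real.Gamma_add_one hy.ne',
    add_right_comm, ← add_assoc]
  ring

lemma betaFn_one_add_mul_sub_one {p q m : ℝ} (hp : 1 < p) (hm : 0 < m)
    (hqm : q * m = p * (1 + m)) :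
    betaFn (1 + m) ((p - 1) * (1 + m)) = p / (p - 1) / q * betaFn m ((q - 1) * m) := by
  have hq : 0 < q := pos_of_mul_pos_left (hqm ▸ by positivity) hm.le
  have hrec := mul_betaFn_add_one_left hm (by nlinarith : 0 < (p - 1) * (1 + m))
  rw [show (p - 1) * (1 + m) + 1 = (q - 1) * m by linarith, add_comm m 1] at hrec
  rw [div_div, div_mul_eq_mul_div, eq_div_iff (by nlinarith)]
  refine mul_left_cancel₀ (by positivity : 1 + m ≠ 0) ?_
  linear_combination q * hrec + betaFn m ((q - 1) * m) * hqm

lemma image_div_one_add_Ioi : (fun u : ℝ => u / (1 + u)) '' Ioi 0 = Ioo 0 1 := by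
  ext t
  constructor
  · rintro ⟨u, hu : 0 < u, rfl⟩
    exact ⟨by positivity, (div_lt_one (by positivity)).mpr (by linarith)⟩
  · rintro ⟨ht0, ht1⟩
    refine ⟨t / (1 - t), div_pos ht0 (by linarith), ?_⟩
    have : 1 - t ≠ 0 := by linarith
    dsimp only
    field_simp
    ring

lemma integral_Ioi_rpow_mul_one_add_rpow_eq_betaFn (s t : ℝ) :
    ∫ u in Ioi 0, u ^ (s - 1) * (1 + u) ^ (-(s + t)) = betaFn s t := by
  have hderiv : ∀ u ∈ Ioi (0 : ℝ),
      HasDerivWithinAt (fun u => u / (1 + u)) (((1 + u) ^ 2)⁻¹) (Ioi 0) u :=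
    fun u (hu : 0 < u) => by
    have h1u : 1 + u ≠ 0 := by positivity
    refine (((hasDerivAt_id' u).div ((hasDerivAt_id' u).const_add 1) h1u).congr_deriv ?_)
      |>.hasDerivWithinAt
    field_simp
    ring
  have hinj : InjOn (fun u : ℝ => u / (1 + u)) (Ioi 0) := fun u (hu : 0 < u) v (hv : 0 < v) h => by
    field_simp [(by positivity : 1 + u ≠ 0), (by positivity : 1 + v ≠ 0)] at h
    linarith
  rw [betaFn, intervalIntegral.integral_of_le zero_le_one, integral_Ioc_eq_integral_Ioo,
    ← image_div_one_add_Ioi,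
    integral_image_eq_integral_abs_deriv_smul measurableSet_Ioi hderiv hinj]
  refine setIntegral_congr_fun measurableSet_Ioi fun u (hu : 0 < u) => ?_
  have h1u : 0 < 1 + u := by linarith
  have hsub : 1 - u / (1 + u) = (1 + u)⁻¹ := by field_simp; ring
  rw [smul_eq_mul, hsub, abs_of_pos (by positivity), Real.div_rpow hu.le h1u.le,
    Real.inv_rpow h1u.le, ← Real.rpow_natCast, ← Real.rpow_neg h1u.le, ← Real.rpow_neg h1u.le,
    div_eq_mul_inv, ← Real.rpow_neg h1u.le, Nat.cast_ofNat]
  have hsplit : (1 + u) ^ (-(s + t)) =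
      (1 + u) ^ (-(2 : ℝ)) * ((1 + u) ^ (-(s - 1)) * (1 + u) ^ (-(t - 1))) := by
    rw [← Real.rpow_add h1u, ← Real.rpow_add h1u]
    ring_nf
  rw [hsplit]
  ring

lemma integral_Ioi_rpow_mul_one_add_rpow_rpow_eq_betaFn_div {a : ℝ} (ha : 0 < a) (s t : ℝ) :
    ∫ r in Ioi 0, r ^ (a * s - 1) * (1 + r ^ a) ^ (-(s + t)) = betaFn s t / a := by
  rw [← integral_Ioi_rpow_mul_one_add_rpow_eq_betaFn,
    ← integral_comp_rpow_Ioi (fun u => u ^ (s - 1) * (1 + u) ^ (-(s + t))) ha.ne',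
    eq_div_iff ha.ne', ← integral_mul_const]
  refine setIntegral_congr_fun measurableSet_Ioi fun r (hr : 0 < r) => ?_
  rw [smul_eq_mul, abs_of_pos ha, ← Real.rpow_mul hr.le,
    show a * s - 1 = (a - 1) + a * (s - 1) by ring, Real.rpow_add hr]
  ring

lemma one_add_rpow_pos {r : ℝ} (hr : 0 ≤ r) (a : ℝ) : 0 < 1 + r ^ a := by
  have := Real.rpow_nonneg hr a
  linarith

lemma continuousOn_one_add_rpow_rpow {a : ℝ} (ha : 0 ≤ a) (c : ℝ) :
    ContinuousOn (fun r : ℝ => (1 + r ^ a) ^ c) (Ici 0) :=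
  ((continuous_const.add (Real.continuous_rpow_const ha)).continuousOn).rpow_const
    fun r (hr : 0 ≤ r) => Or.inl (one_add_rpow_pos hr a).ne'

lemma hasDerivAt_rpow_mul_one_add_rpow_rpow_neg {a c x : ℝ} (hx : 0 < x) :
    HasDerivAt (fun r => r ^ (a * c) * (1 + r ^ a) ^ (-c))
      (a * c * (x ^ (a * c - 1) * (1 + x ^ a) ^ (-(1 + c)))) x := by
  have hb := one_add_rpow_pos hx.le a
  have hpow := Real.hasDerivAt_rpow_const (p := a * c) (Or.inl hx.ne')
  have hbase := ((Real.hasDerivAt_rpow_const (p := a) (Or.inl hx.ne')).const_add 1).rpow_const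
    (p := -c) (Or.inl hb.ne')
  refine (hpow.mul hbase).congr_deriv ?_
  have hx' : x ^ (a * c) * x ^ (a - 1) = x ^ (a * c - 1) * x ^ a := by
    rw [← Real.rpow_add hx, ← Real.rpow_add hx]
    ring_nf
  have hb' : (1 + x ^ a) ^ (-c) = (1 + x ^ a) * (1 + x ^ a) ^ (-(1 + c)) := by
    rw [show -(1 + c) = -c - 1 by ring, Real.rpow_sub_one hb.ne', mul_div_cancel₀ _ hb.ne']
  rw [show -c - 1 = -(1 + c) by ring, hb']
  linear_combination (-(a * c) * (1 + x ^ a) ^ (-(1 + c))) * hx'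

lemma integral_Ioo_rpow_mul_one_add_rpow_rpow_neg {a c R : ℝ} (ha : 0 < a) (hac : 1 ≤ a * c)
    (hR : 0 ≤ R) :
    ∫ r in Ioo 0 R, r ^ (a * c - 1) * (1 + r ^ a) ^ (-(1 + c)) =
      R ^ (a * c) * (1 + R ^ a) ^ (-c) / (a * c) := by
  have hac0 : 0 < a * c := by linarith
  have hIcc : Icc 0 R ⊆ Ici 0 := Icc_subset_Ici_self
  have hcont : ContinuousOn (fun r => r ^ (a * c) * (1 + r ^ a) ^ (-c)) (Icc 0 R) :=
    (Real.continuous_rpow_const hac0.le).continuousOn.mul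
      ((continuousOn_one_add_rpow_rpow ha.le _).mono hIcc)
  have hint : IntervalIntegrable (fun r => a * c * (r ^ (a * c - 1) * (1 + r ^ a) ^ (-(1 + c))))
      volume 0 R := by
    refine ContinuousOn.intervalIntegrable ?_
    rw [uIcc_of_le hR]
    exact continuousOn_const.mul ((Real.continuous_rpow_const (by linarith)).continuousOn.mul
      ((continuousOn_one_add_rpow_rpow ha.le _).mono hIcc))
  have hFTC := intervalIntegral.integral_eq_sub_of_hasDeriv_right_of_le hR hcont
    (fun x hx => (hasDerivAt_rpow_mul_one_add_rpow_rpow_neg hx.1).hasDerivWithinAt) hint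
  rw [intervalIntegral.integral_const_mul, intervalIntegral.integral_of_le hR,
    integral_Ioc_eq_integral_Ioo, Real.zero_rpow hac0.ne', zero_mul, sub_zero] at hFTC
  rw [eq_div_iff hac0.ne', mul_comm, hFTC]

lemma fracHardyOp_extremal {n : ℕ} (hn : n ≠ 0) (β : ℝ) {a m : ℝ} (ha : 0 < a)
    (ham : a * m = n) {x : Euc n} (hx : x ≠ 0) :
    fracHardyOp n β (fun y => (1 + ‖y‖ ^ a) ^ (-(1 + m))) x =
      ballVol n ^ (β / n) * ‖x‖ ^ β * (1 + ‖x‖ ^ a) ^ (-m) := by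
  have hn0 : (0 : ℝ) < n := by positivity
  have hΩ := ballVol_pos n
  have hR : 0 < ‖x‖ := norm_pos_iff.mpr hx
  have hball := integral_Ioo_rpow_mul_one_add_rpow_rpow_neg (c := m) ha
    (ham ▸ by exact_mod_cast Nat.one_le_iff_ne_zero.mpr hn) (norm_nonneg x)
  rw [ham] at hball
  have hΩexp : ballVol n ^ (1 / (n : ℝ) * -(n - β)) * ballVol n = ballVol n ^ (β / n) := by
    rw [← Real.rpow_add_one hΩ.ne']
    congr 1
    field_simp
    ring
  have hRexp : ‖x‖ ^ (-(n - β)) * ‖x‖ ^ (n : ℝ) = ‖x‖ ^ β := by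
    rw [← Real.rpow_add hR]
    ring_nf
  rw [fracHardyOp, setIntegral_norm_lt_comp_norm hn (fun r => (1 + r ^ a) ^ (-(1 + m))), hball,
    sphArea_eq_mul_ballVol, Real.mul_rpow (Real.rpow_nonneg hΩ.le _) hR.le, ← Real.rpow_mul hΩ.le,
    ← hΩexp, ← hRexp]
  field_simp

lemma mixedNorm_extremal (n : ℕ) {p pb a m t : ℝ} (hp : p ≠ 0) (hpb : pb ≠ 0) (ha : 0 < a)
    (ham : a * m = n) (hpt : p * (1 + m) = m + t) :
    mixedNorm n p pb (fun x => (1 + ‖x‖ ^ a) ^ (-(1 + m))) =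
      sphArea n ^ (1 / pb) * (betaFn m t / a) ^ (1 / p) := by
  rw [mixedNorm_eq_of_radial n hp hpb (g := fun r => (1 + r ^ a) ^ (-(1 + m)))
      (fun r hr => (Real.rpow_pos_of_pos (one_add_rpow_pos hr.le a) _).le) fun _ _ => rfl,
    ← integral_Ioi_rpow_mul_one_add_rpow_rpow_eq_betaFn_div ha, ← ham]
  congr 2
  refine setIntegral_congr_fun measurableSet_Ioi fun r (hr : 0 < r) => ?_
  rw [← Real.rpow_mul (one_add_rpow_pos hr.le a).le, mul_comm, neg_mul, mul_comm _ p, hpt]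

lemma mixedNorm_fracHardyOp_extremal {n : ℕ} (hn : n ≠ 0) {β q qb m t : ℝ} (hβ : 0 < β)
    (hq : 0 < q) (hqb : qb ≠ 0) (ham : q * β * m = n) (hqt : q * m = 1 + m + t) :
    mixedNorm n q qb (fracHardyOp n β fun x => (1 + ‖x‖ ^ (q * β)) ^ (-(1 + m))) =
      sphArea n ^ (1 / qb) *
        (ballVol n ^ (β / n * q) * (betaFn (1 + m) t / (q * β))) ^ (1 / q) := by
  have hΩ := ballVol_pos n
  rw [mixedNorm_eq_of_radial n hq.ne' hqb
      (g := fun r => ballVol n ^ (β / n) * r ^ β * (1 + r ^ (q * β)) ^ (-m))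
      (fun r hr => by have := one_add_rpow_pos hr.le (q * β); positivity)
      fun x hx => fracHardyOp_extremal hn β (by positivity) ham hx,
    ← integral_Ioi_rpow_mul_one_add_rpow_rpow_eq_betaFn_div (by positivity), ← integral_const_mul]
  congr 2
  refine setIntegral_congr_fun measurableSet_Ioi fun r (hr : 0 < r) => ?_
  have hb := one_add_rpow_pos hr.le (q * β)
  rw [Real.mul_rpow (by positivity) (Real.rpow_nonneg hb.le _),
    Real.mul_rpow (by positivity) (by positivity), ← Real.rpow_mul hΩ.le, ← Real.rpow_mul hr.le,
    ← Real.rpow_mul hb.le,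
    show q * β * (1 + m) - 1 = β * q + (n - 1) by rw [mul_add, ham]; ring, Real.rpow_add hr,
    show -(1 + m + t) = -m * q by rw [← hqt]; ring]
  ring

theorem mixedNorm_fracHardyOp_extremal_eq {n : ℕ} (hn : n ≠ 0) {β p q pb qb : ℝ} (hβ : 0 < β)
    (hpb : pb ≠ 0) (hqb : qb ≠ 0) (hp : 1 < p) (hpq : p < q) (hscal : 1 / p - 1 / q = β / n) :
    mixedNorm n q qb
        (fracHardyOp n β fun x => (1 + ‖x‖ ^ (q * β)) ^ (-(1 + (n : ℝ) / (q * β)))) =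
      fracHardyConst p q n β * sphArea n ^ (1 / qb - 1 / pb + β / n) *
        mixedNorm n p pb (fun x => (1 + ‖x‖ ^ (q * β)) ^ (-(1 + (n : ℝ) / (q * β)))) := by
  have hn0 : (0 : ℝ) < n := by positivity
  have hq : 0 < q := by linarith
  have ha : 0 < q * β := by positivity
  set m := (n : ℝ) / (q * β) with hm_def
  have hm : 0 < m := by positivity
  have ham : q * β * m = n := mul_div_cancel₀ _ ha.ne'
  have hqm : q * m = p * (1 + m) := by
    rw [hm_def]
    field_simp at hscal ⊢
    linear_combination hscal
  have hconst : fracHardyConst p q n β =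
      (p / (p - 1) / q) ^ (1 / q) * (n * (betaFn m ((q - 1) * m) / (q * β))) ^ (-(β / n)) := by
    have harg : (n : ℝ) / (q / (q - 1) * β) = (q - 1) * m := by
      rw [hm_def]
      field_simp
    rw [fracHardyConst, harg, div_mul_eq_mul_div, mul_div_assoc]
  rw [mixedNorm_fracHardyOp_extremal hn hβ hq hqb ham (t := (p - 1) * (1 + m)) (by linarith),
    betaFn_one_add_mul_sub_one hp hm hqm,
    mixedNorm_extremal n (by linarith) hpb ha ham (t := (q - 1) * m) (by linarith), hconst,
    sphArea_eq_mul_ballVol, mul_div_assoc]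
  have hΩ := ballVol_pos n
  have hB := betaFn_pos hm (by nlinarith : 0 < (q - 1) * m)
  have hc : 0 < p / (p - 1) / q := div_pos (div_pos (by linarith) (by linarith)) hq
  -- Both sides are products of powers of `n`, `Ω_n`, `p' / q` and `B / (q β)`: compare logarithms.
  refine Real.log_injOn_pos (mem_Ioi.mpr (by positivity)) (mem_Ioi.mpr (by positivity)) ?_
  simp (disch := positivity) only [Real.log_mul, Real.log_rpow]
  rw [show 1 / p = 1 / q + β / n by linarith]
  field_simp
  ring

lemma mixedNorm_extremal_pos {n : ℕ} (hn : n ≠ 0) {p pb a : ℝ} (hp : 1 ≤ p) (hpb : pb ≠ 0)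
    (ha : 0 < a) : 0 < mixedNorm n p pb (fun x => (1 + ‖x‖ ^ a) ^ (-(1 + (n : ℝ) / a))) := by
  have hm : 0 < (n : ℝ) / a := by positivity
  rw [mixedNorm_extremal n (by positivity) hpb ha (mul_div_cancel₀ _ ha.ne')
    (t := p * (1 + n / a) - n / a) (by ring)]
  have hB := betaFn_pos hm (by nlinarith : 0 < p * (1 + n / a) - n / a)
  have hω := sphArea_eq_mul_ballVol n ▸ mul_pos (by positivity : (0 : ℝ) < n) (ballVol_pos n)
  positivity

theorem fracHardy_mixed_extremal_general (n : ℕ) (hn : 2 ≤ n) (β p q pb qb : ℝ)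
    (hβ0 : 0 < β) (hpb : 1 < pb) (hqb : 1 < qb)
    (hp : 1 < p) (hpq : p < q) (hscal : 1 / p - 1 / q = β / n) :
    mixedNorm n q qb
        (fracHardyOp n β fun x => (1 + ‖x‖ ^ (q * β)) ^ (-(1 + (n : ℝ) / (q * β))))
        = fracHardyConst p q n β * sphArea n ^ (1 / qb - 1 / pb + β / (n : ℝ)) *
          mixedNorm n p pb (fun x => (1 + ‖x‖ ^ (q * β)) ^ (-(1 + (n : ℝ) / (q * β)))) ∧
      ∀ C : ℝ, 0 ≤ C →
        (∀ f : Euc n → ℝ, (∀ x, 0 ≤ f x) → Measurable f →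
          mixedNorm n q qb (fracHardyOp n β f) ≤ C * mixedNorm n p pb f) →
        fracHardyConst p q n β * sphArea n ^ (1 / qb - 1 / pb + β / (n : ℝ)) ≤ C := by
  have hn0 : n ≠ 0 := by omega
  have ha : 0 < q * β := mul_pos (by linarith) hβ0
  have hpb0 : pb ≠ 0 := (zero_lt_one.trans hpb).ne'
  have hextremal := mixedNorm_fracHardyOp_extremal_eq hn0 hβ0 hpb0 (zero_lt_one.trans hqb).ne'
    hp hpq hscal
  refine ⟨hextremal, fun C _ hC => ?_⟩
  have hnonneg (x : Euc n) : 0 ≤ (1 + ‖x‖ ^ (q * β)) ^ (-(1 + (n : ℝ) / (q * β))) :=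
    Real.rpow_nonneg (one_add_rpow_pos (norm_nonneg x) _).le _
  have hmeas : Measurable fun x : Euc n => (1 + ‖x‖ ^ (q * β)) ^ (-(1 + (n : ℝ) / (q * β))) := by
    fun_prop
  exact le_of_mul_le_mul_right (hextremal ▸ hC _ hnonneg hmeas)
    (mixedNorm_extremal_pos hn0 hp.le hpb0 ha)

/-- extremality of f₀(x) = (1+|x|^{qβ})^{-(1+n/(qβ))} and sharpness of
C_{p,q,n,β}·ω_n^{1/q̄-1/p̄+β/n} on mixed radial-angular spaces. -/
theorem fracHardy_mixed_extremal (n : ℕ) (hn : 2 ≤ n) (β p q pb qb : ℝ)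
    (hβ0 : 0 < β) (hβn : β < n) (hpb : 1 < pb) (hqb : 1 < qb)
    (hp : 1 < p) (hpq : p < q) (hscal : 1 / p - 1 / q = β / n) :
    mixedNorm n q qb
        (fracHardyOp n β fun x => (1 + ‖x‖ ^ (q * β)) ^ (-(1 + (n : ℝ) / (q * β))))
        = fracHardyConst p q n β * sphArea n ^ (1 / qb - 1 / pb + β / (n : ℝ)) *
          mixedNorm n p pb (fun x => (1 + ‖x‖ ^ (q * β)) ^ (-(1 + (n : ℝ) / (q * β)))) ∧
      ∀ C : ℝ, 0 ≤ C →
        (∀ f : Euc n → ℝ, (∀ x, 0 ≤ f x) → Measurable f →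
          mixedNorm n q qb (fracHardyOp n β f) ≤ C * mixedNorm n p pb f) →
        fracHardyConst p q n β * sphArea n ^ (1 / qb - 1 / pb + β / (n : ℝ)) ≤ C :=
  fracHardy_mixed_extremal_general n hn β p q pb qb hβ0 hpb hqb hp hpq hscal

end
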